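/- arXiv:1602.05094 — 2 statements merged into one kernel-verified Lean document; each statement's English description precedes it below -/
import Mathlib

section
/- Let (a_m) be a sequence of real numbers, C a positive integer and K a real constant, such that a_m/m^2 converges to some limit c as m → ∞, and a_m + a_{m+1} = ((m+1)^2 + K)/C for every m divisible by C. Then c = 1/(2C). -/
/-!
Restrict to the multiples `m = C n`. Since `(m + 1)² / m² → 1`, both `a_m / m²` and
`a_{m+1} / m²` tend to `c`, so dividing the recursion by `m²` gives `2c` on the left
and `1/C` on the right.
-/

open Filter Topology

theorem tendsto_natCast_add_one_div_natCast :
    Tendsto (fun m : ℕ => ((m : ℝ) + 1) / m) atTop (𝓝 1) := by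
  have h : Tendsto (fun m : ℕ => 1 + (m : ℝ)⁻¹) atTop (𝓝 (1 + 0)) :=
    tendsto_const_nhds.add tendsto_inv_atTop_nhds_zero_nat
  rw [add_zero] at h
  refine h.congr' ?_
  filter_upwards [eventually_ne_atTop 0] with m hm
  field_simp

theorem tendsto_add_one_sq_add_const_div_sq (K : ℝ) :
    Tendsto (fun m : ℕ => (((m : ℝ) + 1) ^ 2 + K) / (m : ℝ) ^ 2) atTop (𝓝 1) := by
  have h : Tendsto (fun m : ℕ => (((m : ℝ) + 1) / m) ^ 2 + K * ((m : ℝ)⁻¹) ^ 2) atTop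
      (𝓝 (1 ^ 2 + K * 0 ^ 2)) :=
    (tendsto_natCast_add_one_div_natCast.pow 2).add
      (tendsto_const_nhds.mul (tendsto_inv_atTop_nhds_zero_nat.pow 2))
  rw [one_pow, zero_pow two_ne_zero, mul_zero, add_zero] at h
  refine h.congr' ?_
  filter_upwards [eventually_ne_atTop 0] with m hm
  field_simp

theorem Filter.Tendsto.add_succ_div_sq {a : ℕ → ℝ} {c : ℝ}
    (h : Tendsto (fun m : ℕ => a m / (m : ℝ) ^ 2) atTop (𝓝 c)) :
    Tendsto (fun m : ℕ => (a m + a (m + 1)) / (m : ℝ) ^ 2) atTop (𝓝 (2 * c)) := by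
  have hsucc : Tendsto (fun m : ℕ => a (m + 1) / ((m : ℝ) + 1) ^ 2 * (((m : ℝ) + 1) / m) ^ 2)
      atTop (𝓝 (c * 1 ^ 2)) := by
    refine Tendsto.mul ?_ (tendsto_natCast_add_one_div_natCast.pow 2)
    simpa using (tendsto_add_atTop_iff_nat 1).2 h
  rw [show 2 * c = c + c * 1 ^ 2 by ring]
  refine (h.add hsucc).congr' ?_
  filter_upwards [eventually_ne_atTop 0] with m hm
  field_simp

/-- If `a_m / m²` converges to `c` and `a_m + a_{m+1} = ((m+1)² + K)/C` for all `m`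
divisible by `C`, then `c = 1/(2C)`. -/
theorem stmt_4 (a : ℕ → ℝ) (C : ℕ) (hC : 0 < C) (K : ℝ) (c : ℝ)
    (hlim : Tendsto (fun m : ℕ => a m / (m : ℝ) ^ 2) atTop (nhds c))
    (hrec : ∀ m : ℕ, C ∣ m → a m + a (m + 1) = (((m : ℝ) + 1) ^ 2 + K) / C) :
    c = 1 / (2 * C) := by
  have hmul : Tendsto (fun n : ℕ => C * n) atTop atTop := tendsto_id.const_mul_atTop' hC
  have hsum := hlim.add_succ_div_sq.comp hmul
  have hrhs := ((tendsto_add_one_sq_add_const_div_sq K).div_const (C : ℝ)).comp hmul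
  have hrec_div : ∀ n : ℕ, (((((C * n : ℕ) : ℝ) + 1) ^ 2 + K) / ((C * n : ℕ) : ℝ) ^ 2) / C
      = (a (C * n) + a (C * n + 1)) / ((C * n : ℕ) : ℝ) ^ 2 := fun n => by
    rw [hrec (C * n) (dvd_mul_right C n), div_right_comm]
  have hc : 2 * c = 1 / C := tendsto_nhds_unique hsum (hrhs.congr hrec_div)
  have hC' : (C : ℝ) ≠ 0 := by positivity
  field_simp at hc ⊢
  linarith
end

section
/- Let R = ⊕_{k≥0} R_k be a graded ℂ-algebra with R_k finite dimensional, v a real valuation on R with c₁v₀ ≤ v ≤ c₂v₀ as above, and ℱ^x R_k the leading-component filtration associated to v. Then for every m ∈ ℝ, ∑_{k=0}^∞ dim_ℂ(R_k / ℱ^m R_k) = dim_ℂ(R / 𝔞_m(v)), where 𝔞_m(v) = { f ∈ R : v(f) ≥ m } (and both sides are finite). -/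
/-!
Filter `R ⧸ 𝔞` by the images of `R_{<j} = R₀ ⊕ ⋯ ⊕ R_{j-1}`. The `j`-th successive quotient is
`R_j ⧸ R_j ∩ (R_{<j} + 𝔞)`, and `R_j ∩ (R_{<j} + 𝔞)` is exactly `ℱ^m R_j`: its nonzero elements are
the top-degree components of the elements of `𝔞` of degree `j`. Since `v ≥ c₁ v₀`, every element
whose components all have degree `≥ m / c₁` lies in `𝔞`, so the filtration reaches the whole
quotient at `j = ⌈m / c₁⌉` and `ℱ^m R_k = R_k` beyond that.
-/

open DirectSum Module

theorem Submodule.finrank_quotient_eq_finrank_quotient_sup_add {K M : Type*} [DivisionRing K]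
    [AddCommGroup M] [Module K M] (S T : Submodule K M) [Module.Finite K (M ⧸ S)] :
    finrank K (M ⧸ S) = finrank K (M ⧸ S ⊔ T) + finrank K (T ⧸ S.comap T.subtype) := by
  have hker : LinearMap.ker (S.mkQ ∘ₗ T.subtype) = S.comap T.subtype := by
    rw [LinearMap.ker_comp, Submodule.ker_mkQ]
  have hrange : LinearMap.range (S.mkQ ∘ₗ T.subtype) = T.map S.mkQ := by
    rw [LinearMap.range_comp, Submodule.range_subtype]
  rw [← (T.map S.mkQ).finrank_quotient_add_finrank,
    (Submodule.quotientQuotientEquivQuotientSup S T).finrank_eq, ← hrange, ← hker,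
    (S.mkQ ∘ₗ T.subtype).quotKerEquivRange.finrank_eq]

theorem Submodule.finite_quotient_of_fg_of_sup_eq_top {R M : Type*} [Ring R] [AddCommGroup M]
    [Module R M] {P U : Submodule R M} (hP : P.FG) (h : U ⊔ P = ⊤) : Module.Finite R (M ⧸ U) := by
  rw [Module.finite_def, ← (U.map_mkQ_eq_top P).mpr h]
  exact hP.map _

section Graded

variable {K M : Type*} [Ring K] [AddCommGroup M] [Module K M]
  (A : ℕ → Submodule K M) [Decomposition A]

def degreeLT (n : ℕ) : Submodule K M where
  carrier := {x | ∀ i, n ≤ i → decompose A x i = 0}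
  add_mem' {x y} hx hy i hi := by
    rw [decompose_add, DirectSum.add_apply, hx i hi, hy i hi, add_zero]
  zero_mem' i _ := by rw [decompose_zero, DirectSum.zero_apply]
  smul_mem' c x hx i hi := by rw [decompose_smul, DirectSum.smul_apply, hx i hi, smul_zero]

def IsLeadingComponent (g l : M) : Prop :=
  ∃ i : ℕ, (decompose A g i : M) = l ∧ decompose A g i ≠ 0 ∧ ∀ j, decompose A g j ≠ 0 → j ≤ i

variable {A}

theorem degreeLT_zero : degreeLT A 0 = ⊥ := by
  refine eq_bot_iff.mpr fun x hx => ?_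
  rw [Submodule.mem_bot, ← (decompose A).symm_apply_apply x,
    show decompose A x = 0 from DFinsupp.ext fun i => hx i (Nat.zero_le i), decompose_symm_zero]

theorem le_degreeLT {i n : ℕ} (h : i < n) : A i ≤ degreeLT A n :=
  fun _ hx j hj => Subtype.ext (decompose_of_mem_ne A hx (by omega))

theorem degreeLT_mono : Monotone (degreeLT A) :=
  fun _ _ h _ hx i hi => hx i (h.trans hi)

theorem sub_decompose_mem_degreeLT {n : ℕ} {x : M} (hx : x ∈ degreeLT A (n + 1)) :
    x - decompose A x n ∈ degreeLT A n := by
  intro i hi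
  rcases hi.eq_or_lt with rfl | hi
  · simp [decompose_sub]
  · rw [decompose_sub, DirectSum.sub_apply, hx i hi, decompose_coe, of_eq_of_ne _ _ _ hi.ne',
      sub_zero]

theorem degreeLT_succ (n : ℕ) : degreeLT A (n + 1) = A n ⊔ degreeLT A n := by
  refine le_antisymm (fun x hx => ?_) (sup_le (le_degreeLT n.lt_succ_self)
    (degreeLT_mono n.le_succ))
  simpa using Submodule.add_mem_sup (decompose A x n).2 (sub_decompose_mem_degreeLT hx)

theorem degreeLT_fg [∀ k, Module.Finite K (A k)] (n : ℕ) : (degreeLT A n).FG := by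
  induction n with
  | zero => rw [degreeLT_zero]; exact Submodule.fg_bot
  | succ n ih => rw [degreeLT_succ]; exact (Module.Finite.iff_fg.mp inferInstance).sup ih

theorem degreeLT_sup_eq_top {n : ℕ} {W : Submodule K M} (hW : ∀ i, n ≤ i → A i ≤ W) :
    degreeLT A n ⊔ W = ⊤ := by
  refine Submodule.eq_top_iff'.mpr fun x => ?_
  induction x using Decomposition.inductionOn A with
  | zero => exact zero_mem _
  | homogeneous y =>
    rcases lt_or_ge _ n with h | h
    · exact Submodule.mem_sup_left (le_degreeLT h y.2)
    · exact Submodule.mem_sup_right (hW _ h y.2)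
  | add y z hy hz => exact add_mem hy hz

theorem IsLeadingComponent.eq_iff {g l f : M} {j : ℕ} (h : IsLeadingComponent A g l)
    (hf : f ∈ A j) (hf0 : f ≠ 0) :
    l = f ↔ g ∈ degreeLT A (j + 1) ∧ (decompose A g j : M) = f := by
  obtain ⟨i, rfl, hi0, htop⟩ := h
  constructor
  · intro hgi
    obtain rfl : i = j := degree_eq_of_mem_mem A (decompose A g i).2 (hgi ▸ hf) (hgi ▸ hf0)
    exact ⟨fun k hk => by_contra fun hk0 => by have := htop k hk0; omega, hgi⟩
  · rintro ⟨hlow, hgj⟩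
    have hji : j ≤ i := htop j fun h0 => hf0 (by rw [← hgj, h0, ZeroMemClass.coe_zero])
    have hij : i ≤ j := by by_contra; exact hi0 (hlow i (by omega))
    rw [show i = j by omega, hgj]

theorem mem_degreeLT_sup_iff {W : Submodule K M} {j : ℕ} {f : M} (hf : f ∈ A j) :
    f ∈ degreeLT A j ⊔ W ↔ ∃ g ∈ W, g ∈ degreeLT A (j + 1) ∧ (decompose A g j : M) = f := by
  constructor
  · intro h
    obtain ⟨s, hs, w, hw, rfl⟩ := Submodule.mem_sup.mp h
    refine ⟨w, hw, ?_, ?_⟩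
    · simpa using sub_mem (le_degreeLT j.lt_succ_self hf) (degreeLT_mono j.le_succ hs)
    · have hsj : decompose A s j = 0 := hs j le_rfl
      simpa [decompose_add, hsj] using decompose_of_mem_same A hf
  · rintro ⟨g, hg, hlow, rfl⟩
    simpa using Submodule.add_mem_sup (neg_mem (sub_decompose_mem_degreeLT hlow)) hg

theorem comap_eq_comap_degreeLT_sup {W F : Submodule K M} {j : ℕ} {ld : M → M}
    (hld : ∀ g, g ≠ 0 → IsLeadingComponent A g (ld g))
    (hF : ∀ f, f ∈ F ↔ f ∈ A j ∧ (f = 0 ∨ ∃ g, g ≠ 0 ∧ g ∈ W ∧ ld g = f)) :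
    F.comap (A j).subtype = (degreeLT A j ⊔ W).comap (A j).subtype := by
  ext ⟨f, hf⟩
  simp only [Submodule.mem_comap, Submodule.coe_subtype, hF, mem_degreeLT_sup_iff hf, hf, true_and]
  rcases eq_or_ne f 0 with rfl | hf0
  · exact iff_of_true (Or.inl rfl) ⟨0, zero_mem W, zero_mem _, by simp⟩
  simp only [hf0, false_or]
  constructor
  · rintro ⟨g, hg0, hgW, hgf⟩
    exact ⟨g, hgW, ((hld g hg0).eq_iff hf hf0).mp hgf⟩
  · rintro ⟨g, hgW, hg⟩
    have hg0 : g ≠ 0 := by rintro rfl; simp [eq_comm, hf0] at hg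
    exact ⟨g, hg0, hgW, ((hld g hg0).eq_iff hf hf0).mpr hg⟩

theorem eq_of_isLeast_degrees {f : M} {i : ℕ} {x : ℝ} (hf : f ∈ A i)
    (hx : IsLeast {x : ℝ | ∃ k : ℕ, decompose A f k ≠ 0 ∧ x = k} x) : x = i := by
  obtain ⟨⟨k, hk, rfl⟩, -⟩ := hx
  by_contra h
  exact hk (Subtype.ext (decompose_of_mem_ne A hf fun hik => h (by rw [hik])))

theorem le_of_natCeil_div_le {v v₀ : M → ℝ} {c₁ m : ℝ} {a : Submodule K M} (hc₁ : 0 < c₁)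
    (hv₀ : ∀ g, g ≠ 0 → IsLeast {x : ℝ | ∃ k : ℕ, decompose A g k ≠ 0 ∧ x = k} (v₀ g))
    (hv : ∀ g, g ≠ 0 → c₁ * v₀ g ≤ v g) (ha : ∀ f, m ≤ v f → f ∈ a) {i : ℕ}
    (hi : ⌈m / c₁⌉₊ ≤ i) : A i ≤ a := by
  intro f hf
  rcases eq_or_ne f 0 with rfl | hf0
  · exact zero_mem a
  refine ha f ?_
  calc m ≤ c₁ * i := (div_le_iff₀' hc₁).mp ((Nat.le_ceil _).trans (by exact_mod_cast hi))
    _ = c₁ * v₀ f := by rw [eq_of_isLeast_degrees hf (hv₀ f hf0)]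
    _ ≤ v f := hv f hf0

end Graded

theorem finrank_quotient_eq_sum {K M : Type*} [DivisionRing K] [AddCommGroup M] [Module K M]
    {A : ℕ → Submodule K M} [Decomposition A] [∀ k, Module.Finite K (A k)]
    {W : Submodule K M} {N : ℕ} (hW : degreeLT A N ⊔ W = ⊤) :
    finrank K (M ⧸ W) =
      ∑ j ∈ Finset.range N, finrank K (A j ⧸ (degreeLT A j ⊔ W).comap (A j).subtype) := by
  have hfin (j : ℕ) : Module.Finite K (M ⧸ degreeLT A j ⊔ W) :=
    Submodule.finite_quotient_of_fg_of_sup_eq_top (degreeLT_fg N) <| by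
      rw [← top_le_iff, ← hW]
      exact sup_le le_sup_right (le_sup_of_le_left le_sup_right)
  have htelescope (n : ℕ) : finrank K (M ⧸ W) = finrank K (M ⧸ degreeLT A n ⊔ W) +
      ∑ j ∈ Finset.range n, finrank K (A j ⧸ (degreeLT A j ⊔ W).comap (A j).subtype) := by
    induction n with
    | zero => rw [degreeLT_zero, bot_sup_eq, Finset.sum_range_zero, add_zero]
    | succ n ih =>
      rw [ih, Submodule.finrank_quotient_eq_finrank_quotient_sup_add _ (A n), Finset.sum_range_succ,
        sup_right_comm, sup_comm _ (A n), ← degreeLT_succ]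
      ring
  rw [htelescope N, hW, finrank_zero_of_subsingleton, zero_add]

theorem stmt_15_general {R : Type*} [CommRing R] [Algebra ℂ R]
    (A : ℕ → Submodule ℂ R) [GradedAlgebra A]
    [∀ k, Module.Finite ℂ ↥(A k)]
    (v : R → ℝ)
    (v₀ : R → ℝ) (ld : R → R)
    (hv₀ : ∀ g : R, g ≠ 0 →
      IsLeast {x : ℝ | ∃ i : ℕ, (decompose A g) i ≠ 0 ∧ x = i} (v₀ g))
    (hld : ∀ g : R, g ≠ 0 → ∃ i : ℕ, ((decompose A g) i : R) = ld g ∧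
      (decompose A g) i ≠ 0 ∧ ∀ j : ℕ, (decompose A g) j ≠ 0 → j ≤ i)
    (c₁ c₂ : ℝ) (hc₁ : 0 < c₁)
    (hsand : ∀ g : R, g ≠ 0 → c₁ * v₀ g ≤ v g ∧ v g ≤ c₂ * v₀ g)
    (m : ℝ)
    (F : ℕ → Submodule ℂ R)
    (hF : ∀ (k : ℕ) (f : R), f ∈ F k ↔
      f ∈ A k ∧ (f = 0 ∨ ∃ g : R, g ≠ 0 ∧ m ≤ v g ∧ ld g = f))
    (a : Submodule ℂ R)
    (ha : ∀ f : R, f ∈ a ↔ (f = 0 ∨ m ≤ v f)) :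
    ∑' k : ℕ,
        (Module.finrank ℂ (↥(A k) ⧸ (F k).comap (A k).subtype) : ℝ) =
      Module.finrank ℂ (R ⧸ a) := by
  have hhigh (i : ℕ) (hi : ⌈m / c₁⌉₊ ≤ i) : A i ≤ a :=
    le_of_natCeil_div_le hc₁ hv₀ (fun g hg => (hsand g hg).1) (fun f h => (ha f).mpr (Or.inr h)) hi
  have hFa (k : ℕ) : (F k).comap (A k).subtype = (degreeLT A k ⊔ a).comap (A k).subtype := by
    refine comap_eq_comap_degreeLT_sup hld fun f => ?_
    simp only [hF, ha]
    grind
  have hvanish : ∀ k ∉ Finset.range ⌈m / c₁⌉₊,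
      (finrank ℂ (A k ⧸ (F k).comap (A k).subtype) : ℝ) = 0 := by
    intro k hk
    rw [hFa, Submodule.comap_subtype_eq_top.mpr
      (le_sup_of_le_right (hhigh k (by simpa using hk)))]
    exact_mod_cast finrank_zero_of_subsingleton
  rw [tsum_eq_sum hvanish, finrank_quotient_eq_sum (degreeLT_sup_eq_top hhigh)]
  push_cast
  exact Finset.sum_congr rfl fun k _ => by rw [hFa]

/-- Let `R = ⊕ₖ Rₖ` be a graded `ℂ`-algebra with finite dimensional pieces, `v` a real
valuation with `c₁ v₀ ≤ v ≤ c₂ v₀`, `ℱ^m Rₖ` the leading-component filtration and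
`𝔞_m(v) = { f : v(f) ≥ m }` the valuation ideal.  Then
`∑ₖ dim (Rₖ / ℱ^m Rₖ) = dim (R / 𝔞_m(v))`. -/
theorem stmt_15 {R : Type*} [CommRing R] [Algebra ℂ R]
    (A : ℕ → Submodule ℂ R) [GradedAlgebra A]
    [∀ k, Module.Finite ℂ ↥(A k)]
    (v : R → ℝ)
    (hmul : ∀ f g : R, f ≠ 0 → g ≠ 0 → v (f * g) = v f + v g)
    (hadd : ∀ f g : R, f ≠ 0 → g ≠ 0 → f + g ≠ 0 → min (v f) (v g) ≤ v (f + g))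
    (v₀ : R → ℝ) (ld : R → R)
    (hv₀ : ∀ g : R, g ≠ 0 →
      IsLeast {x : ℝ | ∃ i : ℕ, (decompose A g) i ≠ 0 ∧ x = i} (v₀ g))
    (hld : ∀ g : R, g ≠ 0 → ∃ i : ℕ, ((decompose A g) i : R) = ld g ∧
      (decompose A g) i ≠ 0 ∧ ∀ j : ℕ, (decompose A g) j ≠ 0 → j ≤ i)
    (c₁ c₂ : ℝ) (hc₁ : 0 < c₁) (hc₁₂ : c₁ ≤ c₂)
    (hsand : ∀ g : R, g ≠ 0 → c₁ * v₀ g ≤ v g ∧ v g ≤ c₂ * v₀ g)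
    (m : ℝ)
    (F : ℕ → Submodule ℂ R)
    (hF : ∀ (k : ℕ) (f : R), f ∈ F k ↔
      f ∈ A k ∧ (f = 0 ∨ ∃ g : R, g ≠ 0 ∧ m ≤ v g ∧ ld g = f))
    (a : Submodule ℂ R)
    (ha : ∀ f : R, f ∈ a ↔ (f = 0 ∨ m ≤ v f)) :
    ∑' k : ℕ,
        (Module.finrank ℂ (↥(A k) ⧸ (F k).comap (A k).subtype) : ℝ) =
      Module.finrank ℂ (R ⧸ a) :=
  stmt_15_general A v v₀ ld hv₀ hld c₁ c₂ hc₁ hsand m F hF a ha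
end
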